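/- Let (X_n) be a martingale difference sequence with conditional variances v_n, partial sums of variances A_n = ∑_{k≤n} v_k, and let g be a positive increasing function on [0,∞) with g(∞) = ∞ and ∫_0^∞ dx/g(x) < ∞. Then almost surely, on the event {A_n → ∞}, we have (∑_{k≤n} X_k)/√(g(A_n)) → 0. -/

import Mathlib

/-!
Let `A n` be the sum of the conditional variances up to time `n`. It is predictable, hence so are
the bounded weights `c n = g (A n) ^ (-1/2)`, and `M n = ∑_{k<n} c k X (k+1)` is a martingale with
orthogonal increments. Therefore `E[(M n)²] = E[∑_{k<n} (A k - A (k-1)) / g (A k)]` (with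
`A (-1) = 0`), and each term is at most the integral of the decreasing function `1 / g` over
`[A (k-1), A k]`, so `E[(M n)²] ≤ ∫_0^∞ dx / g x`. Being bounded in L², `M` converges almost
surely, and on `{A n → ∞}` Kronecker's lemma turns the convergence of `∑ X (k+1) / √(g (A k))`
into `(∑_{k≤n} X (k+1)) / √(g (A n)) → 0`.
-/

open Filter MeasureTheory Finset Asymptotics Topology

lemma tendsto_sum_mul_sub_div_zero {b t : ℕ → ℝ} (hb : ∀ n, 0 < b n) (hb_mono : Monotone b)
    (hb_top : Tendsto b atTop atTop) (ht : Tendsto t atTop (𝓝 0)) :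
    Tendsto (fun n => (∑ k ∈ range n, (b (k + 1) - b k) * t k) / b n) atTop (𝓝 0) := by
  have hincr : 0 ≤ fun k => b (k + 1) - b k := fun k => sub_nonneg.2 (hb_mono k.le_succ)
  have htel : ∀ n, ∑ k ∈ range n, (b (k + 1) - b k) = b n - b 0 := sum_range_sub b
  have hsum : (fun n => ∑ k ∈ range n, (b (k + 1) - b k) * t k) =o[atTop]
      fun n => ∑ k ∈ range n, (b (k + 1) - b k) := by
    refine IsLittleO.sum_range ?_ hincr ?_
    · simpa [mul_comm] using ((isLittleO_one_iff ℝ).2 ht).mul_isBigO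
        (isBigO_refl (fun k => b (k + 1) - b k) atTop)
    · simp only [htel]; exact tendsto_atTop_add_const_right _ (-b 0) hb_top
  refine (isLittleO_iff_tendsto fun n h => absurd h (hb n).ne').1 (hsum.trans_isBigO ?_)
  refine IsBigO.of_bound 1 (Eventually.of_forall fun n => ?_)
  rw [htel, one_mul, Real.norm_of_nonneg (sub_nonneg.2 (hb_mono n.zero_le)),
    Real.norm_of_nonneg (hb n).le]
  linarith [hb 0]

lemma sum_range_succ_mul_sub (b t : ℕ → ℝ) (n : ℕ) :
    ∑ k ∈ range (n + 1), b k * (t (k + 1) - t k)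
      = b n * t (n + 1) - b 0 * t 0 - ∑ k ∈ range n, (b (k + 1) - b k) * t (k + 1) := by
  induction n with
  | zero => simp only [zero_add, sum_range_one, range_zero, sum_empty]; ring
  | succ n ih => rw [sum_range_succ, ih, sum_range_succ]; ring

theorem tendsto_sum_div_zero_of_tendsto_sum_div {a b : ℕ → ℝ} (hb : ∀ n, 0 < b n)
    (hb_mono : Monotone b) (hb_top : Tendsto b atTop atTop) {L : ℝ}
    (h : Tendsto (fun n => ∑ k ∈ range n, a k / b k) atTop (𝓝 L)) :
    Tendsto (fun n => (∑ k ∈ range (n + 1), a k) / b n) atTop (𝓝 0) := by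
  set t : ℕ → ℝ := fun n => ∑ k ∈ range n, a k / b k - L
  have ht : Tendsto t atTop (𝓝 0) := by simpa using h.sub_const L
  have ha : ∀ k, a k = b k * (t (k + 1) - t k) := fun k => by
    simp only [t, sum_range_succ]; field_simp [(hb k).ne']; ring
  have hinv : Tendsto (fun n => (b n)⁻¹) atTop (𝓝 0) := hb_top.inv_tendsto_atTop
  have hlim := ((ht.comp (tendsto_add_atTop_nat 1)).sub (hinv.const_mul (b 0 * t 0))).sub
    (tendsto_sum_mul_sub_div_zero hb hb_mono hb_top (ht.comp (tendsto_add_atTop_nat 1)))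
  simp only [sub_zero, mul_zero] at hlim
  refine hlim.congr fun n => ?_
  simp only [ha, sum_range_succ_mul_sub, Function.comp_apply]
  field_simp [(hb n).ne']

section NormalizingFunction

variable {g : ℝ → ℝ}

lemma MonotoneOn.measurable_comp_of_nonneg (hgmono : MonotoneOn g (Set.Ici 0)) {Ω : Type*}
    {m : MeasurableSpace Ω} {f : Ω → ℝ} (hf : Measurable f) (hf0 : ∀ ω, 0 ≤ f ω) :
    Measurable fun ω => g (f ω) := by
  have hG : Monotone fun x => g (max x 0) := fun x y hxy =>
    hgmono (le_max_right x 0) (le_max_right y 0) (max_le_max hxy le_rfl)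
  convert hG.measurable.comp hf using 1
  exact funext fun ω => by simp only [Function.comp_apply, max_eq_left (hf0 ω)]

lemma sub_div_le_intervalIntegral_one_div (hgpos : ∀ x, 0 ≤ x → 0 < g x)
    (hgmono : MonotoneOn g (Set.Ici 0)) (hgint : IntegrableOn (fun x => 1 / g x) (Set.Ici 0))
    {a b : ℝ} (ha : 0 ≤ a) (hab : a ≤ b) :
    (b - a) / g b ≤ ∫ x in a..b, 1 / g x := by
  have hsub : Set.uIcc a b ⊆ Set.Ici 0 := by
    rw [Set.uIcc_of_le hab]; exact fun x hx => ha.trans hx.1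
  calc (b - a) / g b = ∫ _ in a..b, 1 / g b := by simp [div_eq_mul_inv]
    _ ≤ ∫ x in a..b, 1 / g x := by
      refine intervalIntegral.integral_mono_on hab intervalIntegrable_const
        ((hgint.mono_set hsub).intervalIntegrable) fun x hx => ?_
      have hx0 : 0 ≤ x := ha.trans hx.1
      exact one_div_le_one_div_of_le (hgpos x hx0) (hgmono hx0 (hx0.trans hx.2) hx.2)

lemma sum_div_le_integral_one_div (hgpos : ∀ x, 0 ≤ x → 0 < g x)
    (hgmono : MonotoneOn g (Set.Ici 0)) (hgint : IntegrableOn (fun x => 1 / g x) (Set.Ici 0))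
    {s : ℕ → ℝ} (hs : ∀ k, 0 ≤ s k) (n : ℕ) :
    ∑ k ∈ range n, s k / g (∑ j ∈ range (k + 1), s j) ≤ ∫ x in Set.Ici 0, 1 / g x := by
  set S : ℕ → ℝ := fun k => ∑ j ∈ range k, s j
  have hS0 : ∀ k, 0 ≤ S k := fun k => sum_nonneg fun j _ => hs j
  have hS_succ : ∀ k, S (k + 1) = S k + s k := fun k => sum_range_succ s k
  have hintegrable : ∀ a b, 0 ≤ a → 0 ≤ b → IntervalIntegrable (fun x => 1 / g x) volume a b :=
    fun a b ha hb => (hgint.mono_set fun x hx =>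
      (le_min ha hb).trans hx.1).intervalIntegrable
  calc ∑ k ∈ range n, s k / g (S (k + 1))
      ≤ ∑ k ∈ range n, ∫ x in S k..S (k + 1), 1 / g x := by
        refine sum_le_sum fun k _ => ?_
        have hsk : s k = S (k + 1) - S k := by rw [hS_succ]; ring
        rw [hsk]
        exact sub_div_le_intervalIntegral_one_div hgpos hgmono hgint (hS0 k)
          (by linarith [hS_succ k, hs k])
    _ = ∫ x in (0 : ℝ)..S n, 1 / g x := by
        rw [intervalIntegral.sum_integral_adjacent_intervals fun k _ =>
          hintegrable _ _ (hS0 k) (hS0 _)]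
        simp [S]
    _ ≤ ∫ x in Set.Ici 0, 1 / g x := by
        rw [intervalIntegral.integral_of_le (hS0 n)]
        exact setIntegral_mono_set hgint
          ((ae_restrict_iff' measurableSet_Ici).2 (ae_of_all _ fun x hx =>
            one_div_nonneg.2 (hgpos x hx).le))
          (Set.Ioc_subset_Ioi_self.trans Set.Ioi_subset_Ici_self).eventuallyLE

lemma tendsto_sum_div_sqrt_zero (hgpos : ∀ x, 0 ≤ x → 0 < g x)
    (hgmono : MonotoneOn g (Set.Ici 0)) (hgtop : Tendsto g atTop atTop) {a s : ℕ → ℝ}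
    (hs : ∀ k, 0 ≤ s k) (hs_top : Tendsto (fun n => ∑ k ∈ range (n + 1), s k) atTop atTop)
    {L : ℝ} (h : Tendsto (fun n => ∑ k ∈ range n, a k / √(g (∑ j ∈ range (k + 1), s j)))
      atTop (𝓝 L)) :
    Tendsto (fun n => (∑ k ∈ range (n + 1), a k) / √(g (∑ k ∈ range (n + 1), s k)))
      atTop (𝓝 0) := by
  have hS0 : ∀ n, 0 ≤ ∑ k ∈ range n, s k := fun n => sum_nonneg fun k _ => hs k
  refine tendsto_sum_div_zero_of_tendsto_sum_div (fun n => Real.sqrt_pos.2 (hgpos _ (hS0 _)))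
    (monotone_nat_of_le_succ fun n => Real.sqrt_le_sqrt (hgmono (hS0 _) (hS0 _) ?_))
    (Real.tendsto_sqrt_atTop.comp (hgtop.comp hs_top)) h
  rw [sum_range_succ _ (n + 1)]
  linarith [hs (n + 1)]

end NormalizingFunction

section Martingale

variable {Ω : Type*} {m0 : MeasurableSpace Ω} {μ : Measure Ω}

lemma integral_mul_eq_integral_mul_condExp {m : MeasurableSpace Ω} (hm : m ≤ m0)
    [SigmaFinite (μ.trim hm)] {Z X : Ω → ℝ} (hZ : StronglyMeasurable[m] Z)
    (hZX : Integrable (Z * X) μ) (hX : Integrable X μ) :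
    ∫ ω, Z ω * X ω ∂μ = ∫ ω, Z ω * μ[X|m] ω ∂μ :=
  (integral_condExp hm).symm.trans
    (integral_congr_ae (condExp_mul_of_stronglyMeasurable_left hZ hZX hX))

lemma eLpNorm_one_le_of_integral_sq_le [IsFiniteMeasure μ] {f : Ω → ℝ} (hf : MemLp f 2 μ)
    {C : ℝ} (hC : ∫ ω, f ω ^ 2 ∂μ ≤ C) :
    eLpNorm f 1 μ ≤ ENNReal.ofReal ((μ.real Set.univ + C) / 2) := by
  rw [eLpNorm_one_eq_lintegral_enorm, ← ofReal_integral_norm_eq_lintegral_enorm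
    (hf.integrable one_le_two)]
  refine ENNReal.ofReal_le_ofReal ?_
  -- `|x| ≤ (1 + x²) / 2`
  calc ∫ ω, ‖f ω‖ ∂μ ≤ ∫ ω, (1 + f ω ^ 2) / 2 ∂μ := by
        refine integral_mono (hf.integrable one_le_two).norm
          (((integrable_const 1).add hf.integrable_sq).div_const 2) fun ω => ?_
        nlinarith [sq_nonneg (|f ω| - 1), sq_abs (f ω), Real.norm_eq_abs (f ω)]
    _ ≤ (μ.real Set.univ + C) / 2 := by
        rw [integral_div, integral_add (integrable_const 1) hf.integrable_sq]
        simp only [integral_const, smul_eq_mul, mul_one]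
        linarith

variable {ℱ : Filtration ℕ m0} {Y : ℕ → Ω → ℝ}

lemma stronglyMeasurable_sum_range (hY_meas : ∀ n, StronglyMeasurable[ℱ (n + 1)] (Y n))
    (n : ℕ) : StronglyMeasurable[ℱ n] fun ω => ∑ k ∈ range n, Y k ω :=
  Finset.stronglyMeasurable_fun_sum _ fun k hk => (hY_meas k).mono (ℱ.mono (mem_range.1 hk))

lemma martingale_sum_range [IsFiniteMeasure μ]
    (hY_meas : ∀ n, StronglyMeasurable[ℱ (n + 1)] (Y n)) (hY_int : ∀ n, Integrable (Y n) μ)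
    (hY_mean : ∀ n, μ[Y n|ℱ n] =ᵐ[μ] 0) :
    Martingale (fun n ω => ∑ k ∈ range n, Y k ω) ℱ μ := by
  refine martingale_of_condExp_sub_eq_zero_nat (stronglyMeasurable_sum_range hY_meas)
    (fun n => integrable_finsetSum _ fun k _ => hY_int k) fun n => ?_
  have hincrement :
      (fun ω => ∑ k ∈ range (n + 1), Y k ω) - (fun ω => ∑ k ∈ range n, Y k ω) = Y n :=
    funext fun ω => by simp [sum_range_succ]
  rw [hincrement]
  exact hY_mean n

lemma integral_sq_sum_range [IsFiniteMeasure μ]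
    (hY_meas : ∀ n, StronglyMeasurable[ℱ (n + 1)] (Y n)) (hY : ∀ n, MemLp (Y n) 2 μ)
    (hY_mean : ∀ n, μ[Y n|ℱ n] =ᵐ[μ] 0) (n : ℕ) :
    ∫ ω, (∑ k ∈ range n, Y k ω) ^ 2 ∂μ = ∑ k ∈ range n, ∫ ω, Y k ω ^ 2 ∂μ := by
  induction n with
  | zero => simp
  | succ n ih =>
    set S : Ω → ℝ := fun ω => ∑ k ∈ range n, Y k ω
    have hS : MemLp S 2 μ := memLp_finsetSum _ fun k _ => hY k
    have hSY : Integrable (S * Y n) μ := hS.integrable_mul (hY n)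
    have horth : ∫ ω, S ω * Y n ω ∂μ = 0 := by
      rw [integral_mul_eq_integral_mul_condExp (ℱ.le n) (stronglyMeasurable_sum_range hY_meas n)
        hSY ((hY n).integrable one_le_two)]
      refine integral_eq_zero_of_ae ?_
      filter_upwards [hY_mean n] with ω hω
      simp [hω]
    calc ∫ ω, (∑ k ∈ range (n + 1), Y k ω) ^ 2 ∂μ
        = ∫ ω, (S ω ^ 2 + 2 * (S ω * Y n ω) + Y n ω ^ 2) ∂μ := by
          simp only [sum_range_succ, S]; congr 1; ext ω; ring
      _ = ∫ ω, S ω ^ 2 ∂μ + 2 * ∫ ω, S ω * Y n ω ∂μ + ∫ ω, Y n ω ^ 2 ∂μ := by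
          have hSY2 : Integrable (fun ω => 2 * (S ω * Y n ω)) μ := hSY.const_mul 2
          rw [integral_add (hS.integrable_sq.fun_add hSY2) (hY n).integrable_sq,
            integral_add hS.integrable_sq hSY2, integral_const_mul]
      _ = ∑ k ∈ range (n + 1), ∫ ω, Y k ω ^ 2 ∂μ := by
          rw [horth, ih, sum_range_succ]; ring

theorem ae_tendsto_sum_range_of_sum_integral_sq_le [IsFiniteMeasure μ]
    (hY_meas : ∀ n, StronglyMeasurable[ℱ (n + 1)] (Y n)) (hY : ∀ n, MemLp (Y n) 2 μ)
    (hY_mean : ∀ n, μ[Y n|ℱ n] =ᵐ[μ] 0) {C : ℝ}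
    (hC : ∀ n, ∑ k ∈ range n, ∫ ω, Y k ω ^ 2 ∂μ ≤ C) :
    ∀ᵐ ω ∂μ, ∃ L, Tendsto (fun n => ∑ k ∈ range n, Y k ω) atTop (𝓝 L) := by
  have hbdd : ∀ n, eLpNorm (fun ω => ∑ k ∈ range n, Y k ω) 1 μ
      ≤ ENNReal.ofReal ((μ.real Set.univ + C) / 2) := fun n =>
    eLpNorm_one_le_of_integral_sq_le (memLp_finsetSum _ fun k _ => hY k)
      ((integral_sq_sum_range hY_meas hY hY_mean n).trans_le (hC n))
  exact (martingale_sum_range hY_meas (fun n => (hY n).integrable one_le_two)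
    hY_mean).submartingale.exists_ae_tendsto_of_bdd hbdd

theorem ae_tendsto_sum_range_mul_of_sum_le [IsFiniteMeasure μ] {X c : ℕ → Ω → ℝ}
    (hX_meas : ∀ n, StronglyMeasurable[ℱ (n + 1)] (X n))
    (hX : ∀ n, MemLp (X n) 2 μ) (hX_mean : ∀ n, μ[X n|ℱ n] =ᵐ[μ] 0)
    (hc_meas : ∀ n, StronglyMeasurable[ℱ n] (c n)) {K : ℝ} (hc_bdd : ∀ n ω, ‖c n ω‖ ≤ K)
    {C : ℝ}
    (hC : ∀ n, ∀ᵐ ω ∂μ, ∑ k ∈ range n, c k ω ^ 2 * μ[fun ω => X k ω ^ 2|ℱ k] ω ≤ C) :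
    ∀ᵐ ω ∂μ, ∃ L, Tendsto (fun n => ∑ k ∈ range n, c k ω * X k ω) atTop (𝓝 L) := by
  have hc2_bdd : ∀ n ω, ‖c n ω ^ 2‖ ≤ K ^ 2 := fun n ω => by
    rw [norm_pow]; exact pow_le_pow_left₀ (norm_nonneg _) (hc_bdd n ω) 2
  have hcX_mean : ∀ n, μ[c n * X n|ℱ n] =ᵐ[μ] 0 := fun n => by
    filter_upwards [condExp_stronglyMeasurable_mul_of_bound (ℱ.le n) (hc_meas n)
      ((hX n).integrable one_le_two) K (ae_of_all _ (hc_bdd n)), hX_mean n] with ω h h0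
    simp [h, h0]
  have hcX_sq : ∀ n, ∫ ω, (c n ω * X n ω) ^ 2 ∂μ
      = ∫ ω, c n ω ^ 2 * μ[fun ω => X n ω ^ 2|ℱ n] ω ∂μ := fun n => by
    simp only [mul_pow]
    exact integral_mul_eq_integral_mul_condExp (ℱ.le n) ((hc_meas n).pow 2)
      ((hX n).integrable_sq.bdd_mul ((hc_meas n).pow 2 |>.mono (ℱ.le n)).aestronglyMeasurable
        (ae_of_all _ (hc2_bdd n))) (hX n).integrable_sq
  have hintegrable : ∀ n, Integrable (fun ω => c n ω ^ 2 * μ[fun ω => X n ω ^ 2|ℱ n] ω) μ :=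
    fun n =>
      integrable_condExp.bdd_mul ((hc_meas n).pow 2 |>.mono (ℱ.le n)).aestronglyMeasurable
        (ae_of_all _ (hc2_bdd n))
  have hcX : ∀ n, MemLp (c n * X n) 2 μ := fun n =>
    (hX n).of_le_mul (c := K) ((hc_meas n).mono (ℱ.le n) |>.aestronglyMeasurable.mul
      (hX n).aestronglyMeasurable) (ae_of_all _ fun ω => by
        rw [Pi.mul_apply, norm_mul]
        exact mul_le_mul_of_nonneg_right (hc_bdd n ω) (norm_nonneg _))
  refine ae_tendsto_sum_range_of_sum_integral_sq_le
    (fun n => ((hc_meas n).mono (ℱ.mono n.le_succ)).mul (hX_meas n)) hcX hcX_mean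
    (C := μ.real Set.univ * C) fun n => ?_
  rw [sum_congr rfl fun k _ => hcX_sq k, ← integral_finsetSum _ fun k _ => hintegrable k]
  simpa using integral_mono_ae (integrable_finsetSum _ fun k _ => hintegrable k)
    (integrable_const C) (hC n)

theorem ae_tendsto_sum_div_sqrt [IsFiniteMeasure μ] {X W : ℕ → Ω → ℝ}
    (hX_meas : ∀ n, StronglyMeasurable[ℱ (n + 1)] (X n))
    (hX : ∀ n, MemLp (X n) 2 μ) (hX_mean : ∀ n, μ[X n|ℱ n] =ᵐ[μ] 0)
    (hW_meas : ∀ n, StronglyMeasurable[ℱ n] (W n)) (hW_nonneg : ∀ n ω, 0 ≤ W n ω)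
    (hW : ∀ n, W n =ᵐ[μ] μ[fun ω => X n ω ^ 2|ℱ n]) {g : ℝ → ℝ}
    (hgpos : ∀ x, 0 ≤ x → 0 < g x) (hgmono : MonotoneOn g (Set.Ici 0))
    (hgint : IntegrableOn (fun x => 1 / g x) (Set.Ici 0)) :
    ∀ᵐ ω ∂μ, ∃ L, Tendsto (fun n => ∑ k ∈ range n, X k ω / √(g (∑ j ∈ range (k + 1), W j ω)))
      atTop (𝓝 L) := by
  set S : ℕ → Ω → ℝ := fun n ω => ∑ j ∈ range (n + 1), W j ω
  have hS_nonneg : ∀ n ω, 0 ≤ S n ω := fun n ω => sum_nonneg fun j _ => hW_nonneg j ω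
  have hS_meas : ∀ n, StronglyMeasurable[ℱ n] (S n) := fun n =>
    Finset.stronglyMeasurable_fun_sum _ fun j hj =>
      (hW_meas j).mono (ℱ.mono (Nat.lt_succ_iff.1 (mem_range.1 hj)))
  set c : ℕ → Ω → ℝ := fun n ω => (√(g (S n ω)))⁻¹
  have hc_meas : ∀ n, StronglyMeasurable[ℱ n] (c n) := fun n =>
    (hgmono.measurable_comp_of_nonneg (hS_meas n).measurable (hS_nonneg n)).sqrt.inv
      |>.stronglyMeasurable
  have hc_bdd : ∀ n ω, ‖c n ω‖ ≤ (√(g 0))⁻¹ := fun n ω => by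
    rw [norm_inv, Real.norm_of_nonneg (Real.sqrt_nonneg _)]
    exact inv_anti₀ (Real.sqrt_pos.2 (hgpos 0 le_rfl))
      (Real.sqrt_le_sqrt (hgmono Set.self_mem_Ici (hS_nonneg n ω) (hS_nonneg n ω)))
  have hC : ∀ n, ∀ᵐ ω ∂μ, ∑ k ∈ range n, c k ω ^ 2 * μ[fun ω => X k ω ^ 2|ℱ k] ω
      ≤ ∫ x in Set.Ici 0, 1 / g x := fun n => by
    filter_upwards [ae_all_iff.2 hW] with ω hω
    convert sum_div_le_integral_one_div hgpos hgmono hgint (fun k => hW_nonneg k ω) n using 2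
      with k
    rw [← hω k, inv_pow, Real.sq_sqrt (hgpos _ (hS_nonneg k ω)).le, inv_mul_eq_div]
  filter_upwards [ae_tendsto_sum_range_mul_of_sum_le hX_meas hX hX_mean hc_meas hc_bdd hC]
    with ω ⟨L, hL⟩
  exact ⟨L, hL.congr fun n => sum_congr rfl fun k _ => inv_mul_eq_div _ _⟩

end Martingale

theorem stmt_12 {Ω : Type*} {m0 : MeasurableSpace Ω} (μ : Measure Ω) [IsProbabilityMeasure μ]
    (ℱ : Filtration ℕ m0) (X : ℕ → Ω → ℝ)
    (hadapted : ∀ n, StronglyMeasurable[ℱ (n + 1)] (X (n + 1)))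
    (hL2 : ∀ n, MemLp (X (n + 1)) 2 μ)
    (hmean : ∀ n, μ[X (n + 1) | ℱ n] =ᵐ[μ] 0)
    (v : ℕ → Ω → ℝ) (hvpos : ∀ n ω, 0 < v (n + 1) ω)
    (hv : ∀ n, v (n + 1) =ᵐ[μ] μ[fun ω => (X (n + 1) ω) ^ 2 | ℱ n])
    (g : ℝ → ℝ) (hgpos : ∀ x, 0 ≤ x → 0 < g x)
    (hgmono : MonotoneOn g (Set.Ici 0))
    (hgtop : Tendsto g atTop atTop)
    (hgint : IntegrableOn (fun x => 1 / g x) (Set.Ici 0)) :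
    ∀ᵐ ω ∂μ,
      Tendsto (fun n => ∑ k ∈ Finset.range (n + 1), v (k + 1) ω) atTop atTop →
      Tendsto (fun n => (∑ k ∈ Finset.range (n + 1), X (k + 1) ω) /
        Real.sqrt (g (∑ k ∈ Finset.range (n + 1), v (k + 1) ω))) atTop (nhds 0) := by
  -- `v (n + 1)` need not be `ℱ n`-measurable: replace it by a predictable version that is
  -- nonnegative everywhere
  set W : ℕ → Ω → ℝ := fun n ω => max (μ[fun ω => X (n + 1) ω ^ 2|ℱ n] ω) 0
  have hW_v : ∀ n, W n =ᵐ[μ] v (n + 1) := fun n => by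
    filter_upwards [hv n] with ω hω
    simp only [W, ← hω, max_eq_left (hvpos n ω).le]
  filter_upwards [ae_tendsto_sum_div_sqrt (W := W) hadapted hL2 hmean
      (fun n => (stronglyMeasurable_condExp.measurable.max measurable_const).stronglyMeasurable)
      (fun n ω => le_max_right _ _) (fun n => (hW_v n).trans (hv n)) hgpos hgmono hgint,
    ae_all_iff.2 hW_v] with ω ⟨L, hL⟩ hWv hv_top
  simp only [hWv] at hL
  exact tendsto_sum_div_sqrt_zero hgpos hgmono hgtop (fun k => (hvpos k ω).le) hv_top hL
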